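/- arXiv:2301.09881 — 3 statements merged into one kernel-verified Lean document; each statement's English description precedes it below -/
import Mathlib

section
/- Let C be a finite set, t a natural number, Γ ≥ 0 a real, and clk : ℕ → C → ℝ a family of clock values with clk s p nondecreasing in s for each p ∈ C. Assume: (initial condition) for every p ∈ C, the set {q ∈ C : clk 0 q ≥ clk 0 p − Γ} has at least t+1 elements; and (jump justification) for every p ∈ C and s ∈ ℕ, if clk (s+1) p > clk s p then there exist q ∈ C and s' ≤ s with clk s' q ≥ clk (s+1) p. Then for every s ∈ ℕ and every p ∈ C, the set {q ∈ C : clk s q ≥ clk s p − Γ} has at least t+1 elements. -/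
attribute [local instance] Classical.propDecidable

/-- the abstract inductive core of Fever's Lemma 1. Let `C` be a finite set,
`t` a natural number, `Γ ≥ 0` a real, and `clk : ℕ → C → ℝ` a family of clock values,
nondecreasing in the step `s` for each `p ∈ C`. If (initial condition) for every `p ∈ C`
the set `{q ∈ C : clk 0 q ≥ clk 0 p - Γ}` has at least `t+1` elements, and (jump
justification) whenever `clk (s+1) p > clk s p` there exist `q ∈ C` and `s' ≤ s` with
`clk s' q ≥ clk (s+1) p`, then for every `s` and every `p ∈ C` the set
`{q ∈ C : clk s q ≥ clk s p - Γ}` has at least `t+1` elements. -/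
theorem fever_abstract_dagger {α : Type*} (C : Finset α) (t : ℕ) (Γ : ℝ) (hΓ : 0 ≤ Γ)
    (clk : ℕ → α → ℝ)
    (hmono : ∀ p ∈ C, Monotone (fun s => clk s p))
    (hinit : ∀ p ∈ C, t + 1 ≤ (C.filter (fun q => clk 0 p - Γ ≤ clk 0 q)).card)
    (hjump : ∀ p ∈ C, ∀ s : ℕ, clk s p < clk (s + 1) p →
      ∃ q ∈ C, ∃ s' : ℕ, s' ≤ s ∧ clk (s + 1) p ≤ clk s' q) :
    ∀ s : ℕ, ∀ p ∈ C, t + 1 ≤ (C.filter (fun q => clk s p - Γ ≤ clk s q)).card := by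
  intro s
  induction s using Nat.strong_induction_on with
  | _ s ih =>
    match s with
    | 0 => exact hinit
    | Nat.succ s =>
      intro p hp
      rcases lt_or_eq_of_le (hmono p hp (Nat.le_succ s)) with hlt | heq
      · obtain ⟨q, hq, s', hs', hval⟩ := hjump p hp s hlt
        refine le_trans (ih s' (Nat.lt_succ_of_le hs') q hq) (Finset.card_le_card ?_)
        intro r hr
        simp only [Finset.mem_filter] at hr ⊢
        refine ⟨hr.1, ?_⟩
        have h1 : clk s' r ≤ clk (s+1) r := hmono r hr.1 (Nat.le_succ_of_le hs')
        linarith [hr.2]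
      · refine le_trans (ih s (Nat.lt_succ_self s) p hp) (Finset.card_le_card ?_)
        intro r hr
        simp only [Finset.mem_filter] at hr ⊢
        refine ⟨hr.1, ?_⟩
        have h1 : clk s r ≤ clk (s+1) r := hmono r hr.1 (Nat.le_succ s)
        linarith [hr.2]
end

section
/- Consider the per-processor state machine of Fever's Algorithm 1: fix a natural number k ≥ 1 and a real Γ > 0, write c_w := w·Γ for a view w ∈ ℕ, and call w initial if k divides w. A state is a pair (v, c) ∈ ℕ × ℝ (current view and local clock), the initial state is (0, 0), and the transitions from a state (v, c) are: (tick) to (v, c + d) for any real d ≥ 0; (clock-entry) to (w, c) for any initial view w with c = c_w; (QC) to (w+1, max(c, c_{w+1})) for any view w ≥ v; and (VC) to (w, max(c, c_w)) for any initial view w > v. Then every state (v, c) reachable from (0, 0) by a finite sequence of transitions satisfies c ≥ v·Γ, and along every such sequence the view component is nondecreasing (in particular, the clock-entry transition can never decrease the view). -/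
/-- The per-processor state machine of Fever's Algorithm 1: a state is a pair `(v, c)` of
the current view and the local clock; `c_w := w * Γ` and `w` is initial if `k ∣ w`. -/
inductive FeverStep (k : ℕ) (Γ : ℝ) : ℕ × ℝ → ℕ × ℝ → Prop
  /-- (tick) the clock advances by any `d ≥ 0` -/
  | tick (v : ℕ) (c : ℝ) (d : ℝ) (hd : 0 ≤ d) : FeverStep k Γ (v, c) (v, c + d)
  /-- (clock-entry) enter an initial view `w` when the clock equals `c_w` -/
  | clockEntry (v : ℕ) (c : ℝ) (w : ℕ) (hw : k ∣ w) (hc : c = (w : ℝ) * Γ) :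
      FeverStep k Γ (v, c) (w, c)
  /-- (QC) on a quorum certificate for a view `w ≥ v`, enter view `w + 1`, forwarding the
  clock to `c_{w+1}` if currently below -/
  | qc (v : ℕ) (c : ℝ) (w : ℕ) (hw : v ≤ w) :
      FeverStep k Γ (v, c) (w + 1, max c (((w + 1 : ℕ) : ℝ) * Γ))
  /-- (VC) on a view certificate for an initial view `w > v`, enter view `w`, forwarding
  the clock to `c_w` if currently below -/
  | vc (v : ℕ) (c : ℝ) (w : ℕ) (hw : k ∣ w) (hv : v < w) :
      FeverStep k Γ (v, c) (w, max c ((w : ℝ) * Γ))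

/-- every state `(v, c)` reachable from `(0, 0)` by a finite sequence of
transitions satisfies `c ≥ v * Γ`, and along every such sequence the view component is
nondecreasing (every transition from a reachable state does not decrease the view). -/
theorem feverStep_clock_ge_view (k : ℕ) (Γ : ℝ) (hk : 1 ≤ k) (hΓ : 0 < Γ) :
    (∀ s : ℕ × ℝ, Relation.ReflTransGen (FeverStep k Γ) ((0 : ℕ), (0 : ℝ)) s →
      (s.1 : ℝ) * Γ ≤ s.2) ∧
    (∀ s s' : ℕ × ℝ, Relation.ReflTransGen (FeverStep k Γ) ((0 : ℕ), (0 : ℝ)) s →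
      FeverStep k Γ s s' → s.1 ≤ s'.1) := by
  have inv : ∀ s : ℕ × ℝ, Relation.ReflTransGen (FeverStep k Γ) ((0 : ℕ), (0 : ℝ)) s →
      (s.1 : ℝ) * Γ ≤ s.2 := by
    intro s hs
    induction hs with
    | refl => simp
    | tail _ h ih =>
      cases h with
      | tick v c d hd => simpa using le_trans ih (by linarith)
      | clockEntry v c w hw hc => simp [hc]
      | qc v c w hw => exact le_max_right _ _
      | vc v c w hw hv => exact le_max_right _ _
  refine ⟨inv, fun s s' hs h => ?_⟩
  have hi := inv s hs
  cases h with
  | tick v c d hd => exact le_refl _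
  | clockEntry v c w hw hc =>
    have : (v : ℝ) * Γ ≤ (w : ℝ) * Γ := by rw [← hc]; exact hi
    have : (v : ℝ) ≤ (w : ℝ) := le_of_mul_le_mul_right (by simpa [mul_comm] using this) hΓ
    exact_mod_cast this
  | qc v c w hw => exact le_trans hw (Nat.le_succ w)
  | vc v c w hw hv => exact le_of_lt hv
end

section
/- Fix natural numbers n ≥ 1 and k ≥ 1, define lead(w) := ⌊w/k⌋ mod n for views w ∈ ℕ, call a view w initial if k divides w, and fix a set B ⊆ Fin n with |B| ≤ n − 2 and a view v ∈ ℕ. Suppose v0 is an initial view with v0 < v, lead(v0) ∉ B and lead(v0) ≠ lead(v), and v0 is the greatest such view; and suppose v1 is an initial view with v1 > v and lead(v1) ∉ B, and v1 is the least such view. Then every initial view w with v0 < w < v1 and lead(w) ∉ B satisfies lead(w) = lead(v), and there is at most one such w; consequently, the number of initial views strictly between v0 and v1 is at most one more than the number of initial views strictly between v0 and v1 whose leader lies in B. -/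
attribute [local instance] Classical.propDecidable

/-- the leader-rotation counting argument from Fever's Lemma 5. With
`lead w = ⌊w/k⌋ % n`, `w` initial iff `k ∣ w`, `B` the set of Byzantine processors with
`|B| ≤ n - 2`, `v0` the greatest initial view `< v` with `lead v0 ∉ B` and
`lead v0 ≠ lead v`, and `v1` the least initial view `> v` with `lead v1 ∉ B`: every
initial view `w` with `v0 < w < v1` and `lead w ∉ B` satisfies `lead w = lead v`, there
is at most one such `w`, and the number of initial views strictly between `v0` and `v1`
is at most one more than the number of those whose leader lies in `B`. -/
theorem fever_leader_rotation (n k : ℕ) (hn : 1 ≤ n) (hk : 1 ≤ k)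
    (lead : ℕ → Fin n) (hlead : ∀ w : ℕ, (lead w : ℕ) = (w / k) % n)
    (B : Finset (Fin n)) (hB : B.card ≤ n - 2)
    (v v0 v1 : ℕ)
    (hv0i : k ∣ v0) (hv0lt : v0 < v) (hv0nB : lead v0 ∉ B) (hv0ne : lead v0 ≠ lead v)
    (hv0max : ∀ w : ℕ, k ∣ w → w < v → lead w ∉ B → lead w ≠ lead v → w ≤ v0)
    (hv1i : k ∣ v1) (hv1gt : v < v1) (hv1nB : lead v1 ∉ B)
    (hv1min : ∀ w : ℕ, k ∣ w → v < w → lead w ∉ B → v1 ≤ w) :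
    (∀ w : ℕ, k ∣ w → v0 < w → w < v1 → lead w ∉ B → lead w = lead v) ∧
    (∀ w w' : ℕ, k ∣ w → v0 < w → w < v1 → lead w ∉ B →
      k ∣ w' → v0 < w' → w' < v1 → lead w' ∉ B → w = w') ∧
    ((Finset.Ioo v0 v1).filter (fun w => k ∣ w)).card ≤
      ((Finset.Ioo v0 v1).filter (fun w => k ∣ w ∧ lead w ∈ B)).card + 1 := by
  have kpos : 0 < k := hk
  have hmain : ∀ w : ℕ, k ∣ w → v0 < w → w < v1 → lead w ∉ B → lead w = lead v := by
    intro w hwd hwgt hwlt hwB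
    rcases lt_trichotomy w v with h | h | h
    · by_contra hne
      have := hv0max w hwd h hwB hne
      omega
    · rw [h]
    · exact absurd (hv1min w hwd h hwB) (by omega)
  have key : ∀ w w' : ℕ, k ∣ w → v0 < w → w < v1 → lead w ∉ B →
      k ∣ w' → v0 < w' → w' < v1 → lead w' ∉ B → w < w' → False := by
    intro w w' hwd hw0 hw1 hwB hwd' hw0' hw1' hwB' hlt
    obtain ⟨a, rfl⟩ := hwd
    obtain ⟨a', rfl⟩ := hwd'
    have ha : a < a' := by
      by_contra h
      push_neg at h
      exact absurd (Nat.mul_le_mul_left k h) (by omega)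
    have hlw : lead (k*a) = lead v := hmain _ ⟨a, rfl⟩ hw0 hw1 hwB
    have hlw' : lead (k*a') = lead v := hmain _ ⟨a', rfl⟩ hw0' hw1' hwB'
    have h1 : (lead (k*a) : ℕ) = a % n := by
      rw [hlead, Nat.mul_div_cancel_left _ kpos]
    have h1' : (lead (k*a') : ℕ) = a' % n := by
      rw [hlead, Nat.mul_div_cancel_left _ kpos]
    have hmodeq : a % n = a' % n := by
      rw [← h1, ← h1', hlw, hlw']
    have hge : a + n ≤ a' := by
      have hd : n ∣ a' - a := (Nat.modEq_iff_dvd' ha.le).mp hmodeq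
      have := Nat.le_of_dvd (by omega) hd
      omega
    set lv0 : ℕ := (lead v0 : ℕ) with hlv0def
    have hlv0lt : lv0 < n := (lead v0).isLt
    have hanlt : a % n < n := Nat.mod_lt _ (by omega)
    set t : ℕ := (lv0 + n - a % n) % n with htdef
    have ht_lt : t < n := Nat.mod_lt _ (by omega)
    have hlv0v : lv0 ≠ (lead v : ℕ) := fun h => hv0ne (Fin.ext h)
    have hawv : a % n = (lead v : ℕ) := by rw [← h1, hlw]
    have ht_pos : 0 < t := by
      by_contra h
      push_neg at h
      have ht0 : (lv0 + n - a % n) % n = 0 := by omega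
      obtain ⟨c, hc⟩ := Nat.dvd_of_mod_eq_zero ht0
      have h1c : 0 < n * c := by omega
      have h2c : n * c < 2 * n := by omega
      have hc1 : c = 1 := by
        rcases c with _ | _ | c
        · simp at h1c
        · rfl
        · exfalso; nlinarith
      rw [hc1, mul_one] at hc
      exact hlv0v (by omega)
    have hmodu : (a + t) % n = lv0 := by
      have heq : (a + t) % n = (a + (lv0 + n - a % n)) % n := by
        rw [htdef, Nat.add_mod_mod]
      have heq2 : a + (lv0 + n - a % n) = n * (a / n + 1) + lv0 := by
        have h3 := Nat.mod_add_div a n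
        have h4 : n * (a / n + 1) = n * (a / n) + n := by ring
        omega
      rw [heq, heq2, Nat.mul_add_mod, Nat.mod_eq_of_lt hlv0lt]
    have hlu : lead (k * (a + t)) = lead v0 := by
      apply Fin.ext
      rw [hlead, Nat.mul_div_cancel_left _ kpos, hmodu]
    have hu0 : v0 < k * (a + t) := by
      calc v0 < k * a := hw0
        _ < k * (a + t) := Nat.mul_lt_mul_of_le_of_lt (le_refl k) (by omega) kpos
    have hu1 : k * (a + t) < v1 := by
      calc k * (a + t) < k * a' := Nat.mul_lt_mul_of_le_of_lt (le_refl k) (by omega) kpos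
        _ < v1 := hw1'
    have := hmain (k * (a + t)) ⟨a + t, rfl⟩ hu0 hu1 (by rw [hlu]; exact hv0nB)
    rw [hlu] at this
    exact hv0ne this
  have huniq : ∀ w w' : ℕ, k ∣ w → v0 < w → w < v1 → lead w ∉ B →
      k ∣ w' → v0 < w' → w' < v1 → lead w' ∉ B → w = w' := by
    intro w w' hwd hw0 hw1 hwB hwd' hw0' hw1' hwB'
    rcases lt_trichotomy w w' with h | h | h
    · exact (key w w' hwd hw0 hw1 hwB hwd' hw0' hw1' hwB' h).elim
    · exact h
    · exact (key w' w hwd' hw0' hw1' hwB' hwd hw0 hw1 hwB h).elim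
  refine ⟨hmain, huniq, ?_⟩
  set S := (Finset.Ioo v0 v1).filter (fun w => k ∣ w) with hSdef
  have hU : (S.filter (fun w => ¬ lead w ∈ B)).card ≤ 1 := by
    rw [Finset.card_le_one]
    intro x hx y hy
    simp only [hSdef, Finset.mem_filter, Finset.mem_Ioo] at hx hy
    exact huniq x y hx.1.2 hx.1.1.1 hx.1.1.2 hx.2 hy.1.2 hy.1.1.1 hy.1.1.2 hy.2
  have hT : S.filter (fun w => lead w ∈ B) =
      (Finset.Ioo v0 v1).filter (fun w => k ∣ w ∧ lead w ∈ B) := by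
    rw [hSdef, Finset.filter_filter]
  have hsplit : ((Finset.Ioo v0 v1).filter (fun w => k ∣ w ∧ lead w ∈ B)).card +
      (S.filter (fun w => ¬ lead w ∈ B)).card = S.card := by
    rw [← hT]
    exact Finset.card_filter_add_card_filter_not (p := fun w => lead w ∈ B)
  omega
end
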